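/- arXiv:1705.09990 — 2 statements merged into one kernel-verified Lean document; each statement's English description precedes it below -/
import Mathlib

section
/- Let A be a finite set of actions, φ : A → ℝ^d a feature map, and for θ ∈ ℝ^d and β > 0 let π(a; θ, β) ∝ exp(θᵀφ(a)/β) be the noisily rational likelihood of an order. For any observed order o and any two rationality parameters β₀, β₁ > 0, if θ̂ maximizes the likelihood π(o; θ, β₀) over a set Θ closed under positive scalar multiplication, then (β₁/β₀)·θ̂ maximizes π(o; θ, β₁) over Θ, and both estimates induce the same set of maximizing actions argmax_a θᵀφ(a). (MLE robustness to misspecified rationality.) -/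
open Real

noncomputable def softmaxLik {A : Type*} [Fintype A] {d : ℕ} (φ : A → Fin d → ℝ)
    (o : A) (θ : Fin d → ℝ) (β : ℝ) : ℝ :=
  Real.exp ((∑ i, θ i * φ o i) / β) / ∑ a : A, Real.exp ((∑ i, θ i * φ a i) / β)

lemma softmaxLik_smul {A : Type*} [Fintype A] {d : ℕ} (φ : A → Fin d → ℝ)
    (o : A) (θ : Fin d → ℝ) {β₀ β₁ : ℝ} (hβ₀ : β₀ ≠ 0) (hβ₁ : β₁ ≠ 0) :
    softmaxLik φ o ((β₁ / β₀) • θ) β₁ = softmaxLik φ o θ β₀ := by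
  have key : ∀ a : A, (∑ i, ((β₁ / β₀) • θ) i * φ a i) / β₁ = (∑ i, θ i * φ a i) / β₀ := by
    intro a
    simp only [Pi.smul_apply, smul_eq_mul, mul_assoc, ← Finset.mul_sum]
    field_simp
  simp only [softmaxLik, key]

theorem mle_robust_to_misspecified_rationality
    {A : Type*} [Fintype A] [Nonempty A] {d : ℕ} (φ : A → Fin d → ℝ) (o : A)
    (Θ : Set (Fin d → ℝ)) (hΘ : ∀ θ ∈ Θ, ∀ c : ℝ, 0 < c → c • θ ∈ Θ)
    (β₀ β₁ : ℝ) (hβ₀ : 0 < β₀) (hβ₁ : 0 < β₁)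
    (θhat : Fin d → ℝ) (hmem : θhat ∈ Θ)
    (hmle : ∀ θ ∈ Θ, softmaxLik φ o θ β₀ ≤ softmaxLik φ o θhat β₀) :
    ((β₁ / β₀) • θhat ∈ Θ ∧
      ∀ θ ∈ Θ, softmaxLik φ o θ β₁ ≤ softmaxLik φ o ((β₁ / β₀) • θhat) β₁) ∧
    {a : A | ∀ b : A, ∑ i, θhat i * φ b i ≤ ∑ i, θhat i * φ a i}
      = {a : A | ∀ b : A, ∑ i, ((β₁ / β₀) • θhat) i * φ b i
          ≤ ∑ i, ((β₁ / β₀) • θhat) i * φ a i} := by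
  have hc : 0 < β₁ / β₀ := div_pos hβ₁ hβ₀
  have hc' : 0 < β₀ / β₁ := div_pos hβ₀ hβ₁
  refine ⟨⟨hΘ θhat hmem _ hc, ?_⟩, ?_⟩
  · intro θ hθ
    have h1 : softmaxLik φ o θ β₁ = softmaxLik φ o ((β₀ / β₁) • θ) β₀ := by
      rw [softmaxLik_smul φ o θ hβ₁.ne' hβ₀.ne']
    rw [h1, softmaxLik_smul φ o θhat hβ₀.ne' hβ₁.ne']
    exact hmle _ (hΘ θ hθ _ hc')
  · ext a
    simp only [Set.mem_setOf_eq, Pi.smul_apply, smul_eq_mul, mul_assoc, ← Finset.mul_sum]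
    constructor
    · intro h b
      exact mul_le_mul_of_nonneg_left (h b) hc.le
    · intro h b
      have := h b
      exact le_of_mul_le_mul_left this hc
end

section
/- Let A be a finite set of actions, φ : A → ℝ^d, and π(o; θ) = exp(θᵀφ(o))/Σ_a exp(θᵀφ(a)) the softmax likelihood. If o is undominated (some θ* makes o the strict unique maximizer of θ*ᵀφ(·)), then there exists K > 0 such that any maximizer θ̂ of θ ↦ π(o; θ) over {θ : ‖θ‖₂ ≤ K} satisfies θ̂ᵀφ(o) ≥ θ̂ᵀφ(a) for all a ∈ A. That is, the norm-constrained MLE robot executes an undominated first order. -/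
open Real

noncomputable def softmaxProbE {A : Type*} [Fintype A] {d : ℕ}
    (φ : A → EuclideanSpace ℝ (Fin d)) (o : A) (θ : EuclideanSpace ℝ (Fin d)) : ℝ :=
  Real.exp (∑ i, θ i * φ o i) / ∑ a : A, Real.exp (∑ i, θ i * φ a i)

/-! If some action `a` scores above `o` under `θ̂`, the likelihood of `o` at `θ̂` is below `1/2`,
since the exponential weight of `a` alone exceeds that of `o`. On the other hand, along the ray
`t • θ*` the likelihood of the undominated order `o` tends to `1`, so it exceeds `1/2` at some
point of the ray; any radius `K` containing that point makes every constrained maximizer rank `o`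
first. -/

open Filter Topology Finset

section Softmax

variable {A : Type*} [Fintype A] [DecidableEq A] {d : ℕ} (φ : A → EuclideanSpace ℝ (Fin d)) (o : A)

theorem softmaxProbE_eq_inv_one_add (θ : EuclideanSpace ℝ (Fin d)) :
    softmaxProbE φ o θ =
      (1 + ∑ a ∈ univ.erase o, exp (∑ i, θ i * φ a i - ∑ i, θ i * φ o i))⁻¹ := by
  have hsplit : ∑ a : A, exp (∑ i, θ i * φ a i) =
      exp (∑ i, θ i * φ o i) *
        (1 + ∑ a ∈ univ.erase o, exp (∑ i, θ i * φ a i - ∑ i, θ i * φ o i)) := by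
    rw [← add_sum_erase _ _ (mem_univ o), mul_add, mul_one, mul_sum]
    simp only [exp_sub, mul_div_cancel₀ _ (exp_pos _).ne']
  rw [softmaxProbE, hsplit, div_mul_cancel_left₀ (exp_pos _).ne']

theorem softmaxProbE_lt_half {θ : EuclideanSpace ℝ (Fin d)} {a : A}
    (ha : ∑ i, θ i * φ o i < ∑ i, θ i * φ a i) : softmaxProbE φ o θ < 1 / 2 := by
  have hao : a ≠ o := by rintro rfl; exact lt_irrefl _ ha
  have hsum : 1 < ∑ b ∈ univ.erase o, exp (∑ i, θ i * φ b i - ∑ i, θ i * φ o i) :=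
    calc 1 < exp (∑ i, θ i * φ a i - ∑ i, θ i * φ o i) := one_lt_exp_iff.2 (sub_pos.2 ha)
      _ ≤ _ := single_le_sum (f := fun b ↦ exp (∑ i, θ i * φ b i - ∑ i, θ i * φ o i))
        (fun b _ ↦ (exp_pos _).le) (mem_erase.2 ⟨hao, mem_univ a⟩)
  rw [softmaxProbE_eq_inv_one_add, one_div]
  exact inv_strictAnti₀ two_pos (by linarith)

theorem tendsto_softmaxProbE_smul_atTop (θstar : EuclideanSpace ℝ (Fin d))
    (hund : ∀ a : A, a ≠ o → ∑ i, θstar i * φ a i < ∑ i, θstar i * φ o i) :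
    Tendsto (fun t : ℝ ↦ softmaxProbE φ o (t • θstar)) atTop (𝓝 1) := by
  have hscore : ∀ (t : ℝ) (a : A), ∑ i, (t • θstar) i * φ a i = t * ∑ i, θstar i * φ a i := by
    intro t a
    simp only [PiLp.smul_apply, smul_eq_mul, mul_sum, mul_assoc]
  have hweights : Tendsto (fun t : ℝ ↦ ∑ a ∈ univ.erase o,
      exp (t * (∑ i, θstar i * φ a i - ∑ i, θstar i * φ o i))) atTop (𝓝 0) := by
    rw [← sum_const_zero (s := univ.erase o)]
    refine tendsto_finsetSum _ fun a ha ↦ tendsto_exp_atBot.comp ?_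
    exact tendsto_id.atTop_mul_const_of_neg (sub_neg.2 (hund a (ne_of_mem_erase ha)))
  have hlim := (tendsto_const_nhds (x := (1 : ℝ))).add hweights |>.inv₀ (by norm_num)
  simp only [add_zero, inv_one] at hlim
  refine hlim.congr fun t ↦ ?_
  simp only [softmaxProbE_eq_inv_one_add, hscore, mul_sub]

end Softmax

theorem constrained_mle_robot_obeys_undominated_order_general
    {A : Type*} [Fintype A] {d : ℕ}
    (φ : A → EuclideanSpace ℝ (Fin d)) (o : A)
    (θstar : EuclideanSpace ℝ (Fin d))
    (hund : ∀ a : A, a ≠ o → ∑ i, θstar i * φ a i < ∑ i, θstar i * φ o i) :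
    ∃ K : ℝ, 0 < K ∧
      ∀ θhat : EuclideanSpace ℝ (Fin d), ‖θhat‖ ≤ K →
        (∀ θ : EuclideanSpace ℝ (Fin d), ‖θ‖ ≤ K →
          softmaxProbE φ o θ ≤ softmaxProbE φ o θhat) →
        ∀ a : A, ∑ i, θhat i * φ a i ≤ ∑ i, θhat i * φ o i := by
  classical
  obtain ⟨t, ht⟩ := ((tendsto_softmaxProbE_smul_atTop φ o θstar hund).eventually
    (lt_mem_nhds (by norm_num : (1 : ℝ) / 2 < 1))).exists
  refine ⟨max 1 ‖t • θstar‖, one_pos.trans_le (le_max_left _ _), fun θhat _ hmax a ↦ ?_⟩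
  by_contra! hbeat
  have hle := hmax (t • θstar) (le_max_right _ _)
  linarith [softmaxProbE_lt_half φ o hbeat]

theorem constrained_mle_robot_obeys_undominated_order
    {A : Type*} [Fintype A] [Nonempty A] {d : ℕ}
    (φ : A → EuclideanSpace ℝ (Fin d)) (o : A)
    (θstar : EuclideanSpace ℝ (Fin d))
    (hund : ∀ a : A, a ≠ o → ∑ i, θstar i * φ a i < ∑ i, θstar i * φ o i) :
    ∃ K : ℝ, 0 < K ∧
      ∀ θhat : EuclideanSpace ℝ (Fin d), ‖θhat‖ ≤ K →
        (∀ θ : EuclideanSpace ℝ (Fin d), ‖θ‖ ≤ K →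
          softmaxProbE φ o θ ≤ softmaxProbE φ o θhat) →
        ∀ a : A, ∑ i, θhat i * φ a i ≤ ∑ i, θhat i * φ o i :=
  constrained_mle_robot_obeys_undominated_order_general φ o θstar hund
end
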